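/- arXiv:1109.3484 — 2 statements merged into one kernel-verified Lean document; each statement's English description precedes it below -/
import Mathlib

section
/- For the bordered complex Hessian matrix, if ρ is a C² function and Φ is a holomorphic map with complex Jacobian J, then det of the bordered Hessian of ρ∘Φ equals det of the bordered Hessian of ρ (evaluated at Φ(z)) times |det J(z)|². Concretely: det [[0, (ρ∘Φ)_{k̄}],[(ρ∘Φ)_j, (ρ∘Φ)_{jk̄}]] = det [[0, ρ_{k̄}],[ρ_j, ρ_{jk̄}]] · |det J_ℂΦ|². -/
/-!
The Wirtinger chain rule gives `∂_j(ρ ∘ Φ) = ∑ₗ (∂_l ρ)(Φ) J_{lj}` and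
`∂̄_k(ρ ∘ Φ) = ∑ₘ (∂̄_m ρ)(Φ) conj J_{mk}`. Differentiating the latter once more, the terms
containing `∂_j conj J_{mk} = conj (∂̄_j J_{mk})` vanish because the entries of the Jacobian are
again holomorphic (Cauchy's formula on complex lines, differentiated under the integral sign).
So the bordered Hessian of `ρ ∘ Φ` is `diag(1, Jᵀ) · H(ρ)(Φ z) · diag(1, conj J)`, and its
determinant picks up the factor `det J · conj (det J) = |det J|²`.
-/

open Complex

/-- The Wirtinger derivative `∂/∂z_j` of a function `f : ℂⁿ → ℂ` at `z`. -/
noncomputable def wdz (n : ℕ) (f : (Fin n → ℂ) → ℂ) (j : Fin n) (z : Fin n → ℂ) : ℂ :=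
  (1/2) * (fderiv ℝ f z (Pi.single j 1) - Complex.I * fderiv ℝ f z (Pi.single j Complex.I))

/-- The Wirtinger derivative `∂/∂z̄_k` of a function `f : ℂⁿ → ℂ` at `z`. -/
noncomputable def wdzbar (n : ℕ) (f : (Fin n → ℂ) → ℂ) (k : Fin n) (z : Fin n → ℂ) : ℂ :=
  (1/2) * (fderiv ℝ f z (Pi.single k 1) + Complex.I * fderiv ℝ f z (Pi.single k Complex.I))

/-- The bordered complex Hessian `[[0, ρ_{k̄}], [ρ_j, ρ_{jk̄}]]` of `ρ : ℂⁿ → ℝ` at `z`. -/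
noncomputable def borderedHessian (n : ℕ) (ρ : (Fin n → ℂ) → ℝ) (z : Fin n → ℂ) :
    Matrix (Fin (n+1)) (Fin (n+1)) ℂ :=
  Matrix.of fun i k =>
    Fin.cases
      (Fin.cases 0 (fun k' => wdzbar n (fun w => ((ρ w : ℝ) : ℂ)) k' z) k)
      (fun j => Fin.cases (wdz n (fun w => ((ρ w : ℝ) : ℂ)) j z)
        (fun k' => wdz n (fun w => wdzbar n (fun w' => ((ρ w' : ℝ) : ℂ)) k' w) j z) k) i

open ComplexConjugate Metric Real
open scoped Matrix

namespace Matrix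

variable {R : Type*} [CommRing R] {n : ℕ}

/-- The block matrix `[[a, r], [c, H]]`: first row `(a, r)`, first column `(a, c)`. -/
def bordered (a : R) (r c : Fin n → R) (H : Matrix (Fin n) (Fin n) R) :
    Matrix (Fin (n + 1)) (Fin (n + 1)) R :=
  of fun i k => Fin.cases (Fin.cases a r k) (fun j => Fin.cases (c j) (H j) k) i

theorem det_bordered_one_zero_zero (A : Matrix (Fin n) (Fin n) R) :
    (bordered 1 0 0 A).det = A.det := by
  rw [det_succ_row_zero, Fin.sum_univ_succ]
  simp [bordered]
  rfl

theorem bordered_mul_bordered_mul_bordered (A B H : Matrix (Fin n) (Fin n) R) (a : R)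
    (r c : Fin n → R) :
    bordered 1 0 0 Aᵀ * bordered a r c H * bordered 1 0 0 B =
      bordered a (r ᵥ* B) (c ᵥ* A) (Aᵀ * H * B) := by
  ext i k
  induction i using Fin.cases <;> induction k using Fin.cases <;>
    simp [bordered, mul_apply, Fin.sum_univ_succ, vecMul, dotProduct, mul_comm]

end Matrix

section HolPart

variable {E : Type*} [AddCommGroup E] [Module ℂ E] [Module ℝ E] [IsScalarTower ℝ ℂ E]
  [TopologicalSpace E]

theorem ContinuousLinearMap.map_complex_smul (L : E →L[ℝ] ℂ) (c : ℂ) (x : E) :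
    L (c • x) = c.re * L x + c.im * L (I • x) := by
  conv_lhs => rw [← re_add_im c, add_smul, mul_smul, ← coe_algebraMap, algebraMap_smul,
    algebraMap_smul]
  simp [Complex.real_smul]

noncomputable def holPart (L : E →L[ℝ] ℂ) : E →ₗ[ℂ] ℂ where
  toFun x := (1 / 2 : ℂ) * (L x - I * L (I • x))
  map_add' x y := by simp only [smul_add, map_add]; ring
  map_smul' c x := by
    have hII : I • I • x = -x := by rw [smul_smul, I_mul_I, neg_one_smul]
    rw [smul_comm I c, L.map_complex_smul c x, L.map_complex_smul c (I • x), hII, map_neg,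
      smul_eq_mul, RingHom.id_apply]
    conv_rhs => rw [← re_add_im c]
    linear_combination (c.im * L (I • x) / 2) * I_mul_I

theorem holPart_apply (L : E →L[ℝ] ℂ) (x : E) :
    holPart L x = (1 / 2 : ℂ) * (L x - I * L (I • x)) := rfl

theorem holPart_comp_restrictScalars {F : Type*} [AddCommGroup F] [Module ℂ F] [Module ℝ F]
    [IsScalarTower ℝ ℂ F] [TopologicalSpace F] (L : F →L[ℝ] ℂ) (A : E →L[ℂ] F) (x : E) :
    holPart (L.comp (A.restrictScalars ℝ)) x = holPart L (A x) := by
  simp [holPart_apply]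

theorem holPart_conj_comp_eq_zero (A : E →L[ℂ] ℂ) :
    holPart ((conjCLE : ℂ →L[ℝ] ℂ).comp (A.restrictScalars ℝ)) = 0 := by
  ext x
  simp only [holPart_apply, ContinuousLinearMap.coe_comp, Function.comp_apply,
    ContinuousLinearMap.coe_restrictScalars', map_smul, smul_eq_mul,
    ContinuousLinearEquiv.coe_coe, conjCLE_apply, map_mul, conj_I, LinearMap.zero_apply]
  linear_combination (conj (A x) / 2) * I_mul_I

theorem holPart_pi_apply {n : ℕ} (L : (Fin n → ℂ) →L[ℝ] ℂ) (x : Fin n → ℂ) :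
    holPart L x = ∑ l, x l * holPart L (Pi.single l 1) := by
  conv_lhs => rw [← Finset.univ_sum_single x, map_sum]
  refine Finset.sum_congr rfl fun l _ => ?_
  rw [← smul_eq_mul, ← map_smul, ← Pi.single_smul', smul_eq_mul, mul_one]

end HolPart

section Holomorphic

variable {E F : Type*} [NormedAddCommGroup E] [NormedSpace ℂ E] [NormedAddCommGroup F]
  [NormedSpace ℂ F] {φ : E → F}

theorem DifferentiableAt.hasDerivAt_comp_add_smul {w : E} (hφ : DifferentiableAt ℂ φ w)
    (u : E) : HasDerivAt (fun t : ℂ => φ (w + t • u)) (fderiv ℂ φ w u) 0 := by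
  have hline : HasDerivAt (fun t : ℂ => w + t • u) u 0 := by
    simpa using ((hasDerivAt_id (0 : ℂ)).smul_const u).const_add w
  have hφ' : HasFDerivAt φ (fderiv ℂ φ w) (w + (0 : ℂ) • u) := by simpa using hφ.hasFDerivAt
  exact hφ'.comp_hasDerivAt 0 hline

theorem Differentiable.comp_add_smul (hφ : Differentiable ℂ φ) (w u : E) :
    Differentiable ℂ fun t : ℂ => φ (w + t • u) :=
  hφ.comp ((differentiable_id.smul_const u).const_add w)

theorem Differentiable.norm_fderiv_le (hφ : Differentiable ℂ φ) {w : E} {M : ℝ}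
    (hM : ∀ x ∈ closedBall w 1, ‖φ x‖ ≤ M) : ‖fderiv ℂ φ w‖ ≤ M := by
  refine ContinuousLinearMap.opNorm_le_of_unit_norm ((norm_nonneg _).trans
    (hM w (mem_closedBall_self zero_le_one))) fun u hu => ?_
  have := Complex.norm_deriv_le_of_forall_mem_sphere_norm_le (c := 0) one_pos
    (hφ.comp_add_smul w u).diffContOnCl fun t ht => hM _ (by simp_all [norm_smul])
  rwa [((hφ w).hasDerivAt_comp_add_smul u).deriv, div_one] at this

theorem Differentiable.exists_norm_fderiv_le [FiniteDimensional ℂ E] (hφ : Differentiable ℂ φ)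
    (z₀ : E) (r : ℝ) : ∃ M, ∀ y ∈ closedBall z₀ r, ‖fderiv ℂ φ y‖ ≤ M := by
  obtain ⟨M, hM⟩ : ∃ M, ∀ x ∈ closedBall z₀ (r + 1), ‖φ x‖ ≤ M :=
    (isCompact_closedBall _ _).exists_bound_of_continuousOn hφ.continuous.continuousOn
  refine ⟨M, fun y hy => hφ.norm_fderiv_le fun x hx => hM x ?_⟩
  simp only [mem_closedBall] at *
  linarith [dist_triangle x y z₀]

theorem Differentiable.fderiv_apply_eq_integral [CompleteSpace F] (hφ : Differentiable ℂ φ)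
    (w v : E) :
    fderiv ℂ φ w v = (2 * π * I)⁻¹ •
      ∫ θ in 0..2 * π, (I * (circleMap 0 1 θ)⁻¹) • φ (w + circleMap 0 1 θ • v) := by
  rw [← ((hφ w).hasDerivAt_comp_add_smul v).deriv, eq_inv_smul_iff₀ two_pi_I_ne_zero,
    ← ((hφ.comp_add_smul w v).differentiableOn).deriv_eq_smul_circleIntegral one_pos]
  refine intervalIntegral.integral_congr fun θ _ => ?_
  have hγ : circleMap 0 1 θ ≠ 0 := circleMap_ne_center one_ne_zero
  simp only [deriv_circleMap, sub_zero, smul_smul]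
  congr 1
  field_simp

theorem Differentiable.differentiable_fderiv_apply [FiniteDimensional ℂ E]
    [FiniteDimensional ℂ F] (hφ : Differentiable ℂ φ) (v : E) :
    Differentiable ℂ fun w => fderiv ℂ φ w v := by
  intro z₀
  set γ := circleMap (0 : ℂ) 1
  set c : ℝ → ℂ := fun θ => I * (γ θ)⁻¹
  have hc : Continuous c :=
    continuous_const.mul ((continuous_circleMap 0 1).inv₀ fun θ => circleMap_ne_center one_ne_zero)
  have hc_norm : ∀ θ, ‖c θ‖ = 1 := by simp [c, γ]
  have hshift : ∀ w, Continuous fun θ => w + γ θ • v := fun w =>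
    continuous_const.add ((continuous_circleMap 0 1).smul continuous_const)
  obtain ⟨M, hM⟩ := hφ.exists_norm_fderiv_le z₀ (‖v‖ + 1)
  have hderiv : HasFDerivAt (fun w => ∫ θ in 0..2 * π, c θ • φ (w + γ θ • v))
      (∫ θ in 0..2 * π, c θ • fderiv ℂ φ (z₀ + γ θ • v)) z₀ := by
    refine intervalIntegral.hasFDerivAt_integral_of_dominated_of_fderiv_le (bound := fun _ => M)
      (F' := fun w θ => c θ • fderiv ℂ φ (w + γ θ • v)) (ball_mem_nhds z₀ one_pos) ?_ ?_ ?_ ?_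
      (intervalIntegrable_const (μ := MeasureTheory.volume)) ?_
    · exact .of_forall fun w => (hc.smul (hφ.continuous.comp (hshift w))).aestronglyMeasurable
    · exact (hc.smul (hφ.continuous.comp (hshift z₀))).intervalIntegrable _ _
    · borelize E (E →L[ℂ] F)
      exact hc.aestronglyMeasurable.smul
        ((measurable_fderiv ℂ φ).comp (hshift z₀).measurable).aestronglyMeasurable
    · refine .of_forall fun θ _ x hx => ?_
      have hγv : ‖γ θ • v‖ = ‖v‖ := by simp [γ, norm_smul]
      rw [norm_smul, hc_norm, one_mul]
      refine hM _ ?_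
      rw [mem_ball, dist_eq_norm] at hx
      rw [mem_closedBall, dist_eq_norm, add_sub_right_comm]
      linarith [norm_add_le (x - z₀) (γ θ • v)]
    · exact .of_forall fun θ _ x _ =>
        ((hφ _).hasFDerivAt.comp x ((hasFDerivAt_id x).add_const _)).const_smul (c θ)
  rw [show (fun w => fderiv ℂ φ w v) = _ from funext fun w => hφ.fderiv_apply_eq_integral w v]
  exact hderiv.differentiableAt.const_smul _

end Holomorphic

section Wirtinger

variable {n : ℕ}

noncomputable def complexJacobian (Φ : (Fin n → ℂ) → (Fin n → ℂ)) (z : Fin n → ℂ) :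
    Matrix (Fin n) (Fin n) ℂ :=
  Matrix.of fun j k => fderiv ℂ Φ z (Pi.single k 1) j

theorem Differentiable.differentiableAt_complexJacobian_apply
    {Φ : (Fin n → ℂ) → (Fin n → ℂ)} (hΦ : Differentiable ℂ Φ) (j k : Fin n) (z : Fin n → ℂ) :
    DifferentiableAt ℂ (fun w => complexJacobian Φ w j k) z :=
  differentiableAt_pi.1 (hΦ.differentiable_fderiv_apply (Pi.single k 1) z) j

theorem wdz_eq_holPart (f : (Fin n → ℂ) → ℂ) (j : Fin n) (z : Fin n → ℂ) :
    wdz n f j z = holPart (fderiv ℝ f z) (Pi.single j 1) := by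
  rw [holPart_apply, ← Pi.single_smul', smul_eq_mul, mul_one]
  rfl

theorem wdzbar_eq_conj_wdz_conj (f : (Fin n → ℂ) → ℂ) (k : Fin n) (z : Fin n → ℂ) :
    wdzbar n f k z = conj (wdz n (fun w => conj (f w)) k z) := by
  have hconj : (fun w => conj (f w)) = conjCLE ∘ f := rfl
  simp only [wdz, wdzbar, hconj, ContinuousLinearEquiv.comp_fderiv]
  simp [map_ofNat]

theorem wdzbar_ofReal (ρ : (Fin n → ℂ) → ℝ) (k : Fin n) (z : Fin n → ℂ) :
    wdzbar n (fun w => (ρ w : ℂ)) k z = conj (wdz n (fun w => (ρ w : ℂ)) k z) := by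
  simp [wdzbar_eq_conj_wdz_conj]

theorem wdz_comp {g : (Fin n → ℂ) → ℂ} {Φ : (Fin n → ℂ) → (Fin n → ℂ)} {z : Fin n → ℂ}
    (hg : DifferentiableAt ℝ g (Φ z)) (hΦ : DifferentiableAt ℂ Φ z) (j : Fin n) :
    wdz n (fun w => g (Φ w)) j z = ∑ l, wdz n g l (Φ z) * complexJacobian Φ z l j := by
  have hchain : fderiv ℝ (fun w => g (Φ w)) z =
      (fderiv ℝ g (Φ z)).comp ((fderiv ℂ Φ z).restrictScalars ℝ) := by
    rw [fderiv_fun_comp z hg (hΦ.restrictScalars ℝ), (hΦ.hasFDerivAt.restrictScalars ℝ).fderiv]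
  rw [wdz_eq_holPart, hchain, holPart_comp_restrictScalars, holPart_pi_apply]
  simp [wdz_eq_holPart, complexJacobian, mul_comm]

theorem wdz_ofReal_comp {ρ : (Fin n → ℂ) → ℝ} {Φ : (Fin n → ℂ) → (Fin n → ℂ)}
    {z : Fin n → ℂ} (hρ : DifferentiableAt ℝ ρ (Φ z)) (hΦ : DifferentiableAt ℂ Φ z) (j : Fin n) :
    wdz n (fun w => (ρ (Φ w) : ℂ)) j z =
      ∑ l, wdz n (fun w => (ρ w : ℂ)) l (Φ z) * complexJacobian Φ z l j :=
  wdz_comp (ofRealCLM.differentiableAt.comp _ hρ) hΦ j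

theorem wdzbar_ofReal_comp {ρ : (Fin n → ℂ) → ℝ} {Φ : (Fin n → ℂ) → (Fin n → ℂ)}
    {z : Fin n → ℂ} (hρ : DifferentiableAt ℝ ρ (Φ z)) (hΦ : DifferentiableAt ℂ Φ z) (k : Fin n) :
    wdzbar n (fun w => (ρ (Φ w) : ℂ)) k z =
      ∑ m, wdzbar n (fun w => (ρ w : ℂ)) m (Φ z) * conj (complexJacobian Φ z m k) := by
  rw [wdzbar_ofReal, wdz_ofReal_comp hρ hΦ, map_sum]
  simp only [map_mul, wdzbar_ofReal]

theorem wdz_conj_eq_zero {h : (Fin n → ℂ) → ℂ} {z : Fin n → ℂ} (hh : DifferentiableAt ℂ h z)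
    (j : Fin n) : wdz n (fun w => conj (h w)) j z = 0 := by
  have hconj : fderiv ℝ (fun w => conj (h w)) z =
      (conjCLE : ℂ →L[ℝ] ℂ).comp ((fderiv ℂ h z).restrictScalars ℝ) :=
    ((conjCLE : ℂ →L[ℝ] ℂ).hasFDerivAt.comp z (hh.hasFDerivAt.restrictScalars ℝ)).fderiv
  rw [wdz_eq_holPart, hconj, holPart_conj_comp_eq_zero, LinearMap.zero_apply]

theorem wdz_sum {ι : Type*} (s : Finset ι) {u : ι → (Fin n → ℂ) → ℂ} {z : Fin n → ℂ}
    (hu : ∀ i ∈ s, DifferentiableAt ℝ (u i) z) (j : Fin n) :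
    wdz n (fun w => ∑ i ∈ s, u i w) j z = ∑ i ∈ s, wdz n (u i) j z := by
  simp only [wdz, fderiv_fun_sum hu, FunLike.coe_sum, Finset.sum_apply, Finset.mul_sum,
    ← Finset.sum_sub_distrib]

theorem wdz_mul {u v : (Fin n → ℂ) → ℂ} {z : Fin n → ℂ} (hu : DifferentiableAt ℝ u z)
    (hv : DifferentiableAt ℝ v z) (j : Fin n) :
    wdz n (fun w => u w * v w) j z = wdz n u j z * v z + u z * wdz n v j z := by
  simp only [wdz, fderiv_fun_mul hu hv, add_apply, smul_apply, smul_eq_mul]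
  ring

theorem differentiable_wdzbar {f : (Fin n → ℂ) → ℂ} (hf : ContDiff ℝ 2 f) (k : Fin n) :
    Differentiable ℝ (wdzbar n f k) := by
  unfold wdzbar
  fun_prop

theorem wdz_wdzbar_ofReal_comp {ρ : (Fin n → ℂ) → ℝ} {Φ : (Fin n → ℂ) → (Fin n → ℂ)}
    (hρ : ContDiff ℝ 2 ρ) (hΦ : Differentiable ℂ Φ) (j k : Fin n) (z : Fin n → ℂ) :
    wdz n (wdzbar n (fun w => (ρ (Φ w) : ℂ)) k) j z =
      ∑ m, (∑ l, wdz n (wdzbar n (fun w => (ρ w : ℂ)) m) l (Φ z) * complexJacobian Φ z l j) *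
        conj (complexJacobian Φ z m k) := by
  have hρ1 : Differentiable ℝ ρ := hρ.differentiable (by norm_num)
  have hg : ∀ m, Differentiable ℝ (wdzbar n (fun w => (ρ w : ℂ)) m) := fun m =>
    differentiable_wdzbar (ofRealCLM.contDiff.comp hρ) m
  have hgΦ : ∀ m, DifferentiableAt ℝ (fun w => wdzbar n (fun w' => (ρ w' : ℂ)) m (Φ w)) z :=
    fun m => (hg m _).comp z ((hΦ z).restrictScalars ℝ)
  have hJ : ∀ m, DifferentiableAt ℝ (fun w => conj (complexJacobian Φ w m k)) z := fun m =>
    conjCLE.differentiableAt.comp z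
      ((hΦ.differentiableAt_complexJacobian_apply m k z).restrictScalars ℝ)
  rw [show wdzbar n (fun w => (ρ (Φ w) : ℂ)) k = _ from
    funext fun w => wdzbar_ofReal_comp (hρ1 _) (hΦ w) k,
    wdz_sum _ fun m _ => (hgΦ m).fun_mul (hJ m)]
  refine Finset.sum_congr rfl fun m _ => ?_
  rw [wdz_mul (hgΦ m) (hJ m), wdz_conj_eq_zero (hΦ.differentiableAt_complexJacobian_apply m k z),
    wdz_comp (hg m _) (hΦ z), mul_zero, add_zero]

theorem borderedHessian_eq_bordered (ρ : (Fin n → ℂ) → ℝ) (z : Fin n → ℂ) :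
    borderedHessian n ρ z = Matrix.bordered 0 (fun k => wdzbar n (fun w => (ρ w : ℂ)) k z)
      (fun j => wdz n (fun w => (ρ w : ℂ)) j z)
      (Matrix.of fun j k => wdz n (wdzbar n (fun w => (ρ w : ℂ)) k) j z) := rfl

theorem borderedHessian_comp {ρ : (Fin n → ℂ) → ℝ} {Φ : (Fin n → ℂ) → (Fin n → ℂ)}
    (hρ : ContDiff ℝ 2 ρ) (hΦ : Differentiable ℂ Φ) (z : Fin n → ℂ) :
    borderedHessian n (ρ ∘ Φ) z =
      Matrix.bordered 1 0 0 (complexJacobian Φ z)ᵀ * borderedHessian n ρ (Φ z) *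
        Matrix.bordered 1 0 0 ((complexJacobian Φ z).map conj) := by
  have hρ1 : Differentiable ℝ ρ := hρ.differentiable (by norm_num)
  rw [borderedHessian_eq_bordered, borderedHessian_eq_bordered,
    Matrix.bordered_mul_bordered_mul_bordered]
  refine congr (congr (congrArg _ ?_) ?_) ?_
  · ext k
    simp [wdzbar_ofReal_comp (hρ1 _) (hΦ z), Matrix.vecMul, dotProduct]
  · ext j
    simp [wdz_ofReal_comp (hρ1 _) (hΦ z), Matrix.vecMul, dotProduct]
  · ext j k
    simp [wdz_wdzbar_ofReal_comp hρ hΦ, Matrix.mul_apply, mul_comm]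

end Wirtinger

/-- If `ρ` is `C²` and `Φ` is holomorphic with complex Jacobian matrix `J`, then
`det [[0, (ρ∘Φ)_{k̄}],[(ρ∘Φ)_j, (ρ∘Φ)_{jk̄}]] = det [[0, ρ_{k̄}],[ρ_j, ρ_{jk̄}]](Φ(z)) · |det J(z)|²`. -/
theorem bordered_hessian_transformation (n : ℕ) (ρ : (Fin n → ℂ) → ℝ)
    (Φ : (Fin n → ℂ) → (Fin n → ℂ))
    (hρ : ContDiff ℝ 2 ρ) (hΦ : Differentiable ℂ Φ) (z : Fin n → ℂ)
    (J : Matrix (Fin n) (Fin n) ℂ)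
    (hJ : ∀ j k, J j k = fderiv ℂ Φ z (Pi.single k 1) j) :
    (borderedHessian n (ρ ∘ Φ) z).det =
      (borderedHessian n ρ (Φ z)).det * ((‖J.det‖ : ℝ) : ℂ) ^ 2 := by
  have hJac : complexJacobian Φ z = J := (Matrix.ext hJ).symm
  have hconj : (J.map conj).det = conj J.det := (RingHom.map_det _ _).symm
  rw [borderedHessian_comp hρ hΦ, hJac, Matrix.det_mul, Matrix.det_mul,
    Matrix.det_bordered_one_zero_zero, Matrix.det_bordered_one_zero_zero, Matrix.det_transpose,
    hconj, ← ofReal_pow, Complex.sq_norm, ← mul_conj]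
  ring
end

section
/- There is no constant M > 0 such that F_B^Ω(z,ξ) ≤ M·F_S^Ω(z,ξ) for all bounded domains Ω ⊂ ℂ with smooth boundary and all (z,ξ) ∈ TΩ, and there is no constant m > 0 such that F_B^Ω(z,ξ) ≥ m·F_S^Ω(z,ξ) universally. Specifically, on the annuli Ω_r = {r<|z|<1}: F_S^{Ω_r}(√r,1)/F_B^{Ω_r}(√r,1) → ∞ and F_S^{Ω_r}(r^{1/5},1)/F_B^{Ω_r}(r^{1/5},1) → 0 as r → 0⁺. -/
/-! At `z = √r` the Szegő metric grows like `1/(2√r)` while the Bergman metric grows only like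
`2√(log (1/r))`, and `√r · √(log (1/r)) = √(-r log r) → 0`; at `z = r^{1/5}` the Szegő metric stays
bounded while the Bergman metric still grows like `√(2 log (1/r))`. So the two ratios `F_S / F_B`
tend to `∞` and to `0`, which rules out a comparison constant in either direction. -/

open Real Filter Topology

lemma tendsto_log_one_div_nhdsGT_zero :
    Tendsto (fun r : ℝ => log (1 / r)) (𝓝[>] 0) atTop := by
  simpa only [one_div, log_inv, Function.comp_def] using
    tendsto_neg_atBot_atTop.comp tendsto_log_nhdsGT_zero

lemma tendsto_sqrt_log_one_div_nhdsGT_zero :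
    Tendsto (fun r : ℝ => √(log (1 / r))) (𝓝[>] 0) atTop :=
  tendsto_sqrt_atTop.comp tendsto_log_one_div_nhdsGT_zero

lemma tendsto_sqrt_mul_sqrt_log_one_div_nhdsGT_zero :
    Tendsto (fun r : ℝ => √r * √(log (1 / r))) (𝓝[>] 0) (𝓝 0) := by
  have h : Tendsto (fun r => √(negMulLog r)) (𝓝[>] 0) (𝓝 0) := by
    simpa [Function.comp_def] using
      ((continuous_sqrt.comp continuous_negMulLog).tendsto 0).mono_left nhdsWithin_le_nhds
  refine h.congr' ?_
  filter_upwards [self_mem_nhdsWithin] with r (hr : 0 < r)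
  rw [← sqrt_mul hr.le, negMulLog, one_div, log_inv]
  ring_nf

section

variable {α : Type*} {l : Filter α} {f g : α → ℝ} {s : Set α}

lemma tendsto_div_atTop_of_mul_tendsto {w : α → ℝ} {a : ℝ} (ha : 0 < a)
    (hf : Tendsto (fun x => w x * f x) l (𝓝 a)) (hg : Tendsto (fun x => w x * g x) l (𝓝 0))
    (hwg : ∀ᶠ x in l, 0 < w x * g x) :
    Tendsto (fun x => f x / g x) l atTop := by
  have hinv := (tendsto_nhdsWithin_iff.mpr ⟨hg, hwg⟩).inv_tendsto_nhdsGT_zero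
  refine (hf.pos_mul_atTop ha hinv).congr' ?_
  filter_upwards [hwg] with x hx
  have hw : w x ≠ 0 := left_ne_zero_of_mul hx.ne'
  simp only [Pi.inv_apply]
  field_simp

lemma tendsto_div_nhds_zero_of_div_tendsto {L : α → ℝ} {a b : ℝ} (hb : b ≠ 0)
    (hf : Tendsto f l (𝓝 a)) (hL : Tendsto L l atTop) (hg : Tendsto (fun x => g x / L x) l (𝓝 b)) :
    Tendsto (fun x => f x / g x) l (𝓝 0) := by
  have h := (hf.div_atTop hL).div hg hb
  rw [zero_div] at h
  refine h.congr' ?_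
  filter_upwards [hL.eventually_ne_atTop 0] with x hx
  exact div_div_div_cancel_right₀ hx _ _

lemma exists_lt_mul_of_tendsto_div_atTop [l.NeBot] (hs : ∀ᶠ x in l, x ∈ s)
    (hg : ∀ x ∈ s, 0 < g x) (h : Tendsto (fun x => f x / g x) l atTop) (M : ℝ) :
    ∃ x ∈ s, M * g x < f x := by
  obtain ⟨x, hx, hM⟩ := (hs.and (h.eventually_gt_atTop M)).exists
  exact ⟨x, hx, (lt_div_iff₀ (hg x hx)).mp hM⟩

lemma exists_lt_mul_of_tendsto_div_nhds_zero [l.NeBot] (hs : ∀ᶠ x in l, x ∈ s)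
    (hg : ∀ x ∈ s, 0 < g x) (h : Tendsto (fun x => f x / g x) l (𝓝 0)) {m : ℝ} (hm : 0 < m) :
    ∃ x ∈ s, f x < m * g x := by
  obtain ⟨x, hx, hm⟩ := (hs.and (h.eventually_lt_const hm)).exists
  exact ⟨x, hx, (div_lt_iff₀ (hg x hx)).mp hm⟩

end

/-- There is no universal constant comparing the Bergman and Szegő metrics: for the annuli
`Ω_r = {r < |z| < 1}`, writing `FS r t`, `FB r t` for the Szegő and Bergman metrics of `Ω_r`
at the point `t` in the unit direction, the four limits
`√r·FS r √r → 1/2`, `FB r √r/√(log(1/r)) → 2`, `FS r r^{1/5} → 1`,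
`FB r r^{1/5}/√(log(1/r)) → √2` imply that
`FS r √r / FB r √r → ∞` and `FS r r^{1/5} / FB r r^{1/5} → 0` as `r → 0⁺`; in particular
there is no constant `M > 0` with `FB ≤ M·FS` on all annuli, and no constant `m > 0` with
`m·FS ≤ FB` on all annuli. -/
theorem no_universal_bergman_szego_comparison (FS FB : ℝ → ℝ → ℝ)
    (hpos : ∀ r ∈ Set.Ioo (0:ℝ) 1, 0 < FS r (Real.sqrt r) ∧ 0 < FB r (Real.sqrt r) ∧
      0 < FS r (r ^ ((1:ℝ)/5)) ∧ 0 < FB r (r ^ ((1:ℝ)/5)))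
    (h1 : Tendsto (fun r : ℝ => Real.sqrt r * FS r (Real.sqrt r)) (𝓝[>] (0:ℝ)) (𝓝 (1/2)))
    (h2 : Tendsto (fun r : ℝ => FB r (Real.sqrt r) / Real.sqrt (Real.log (1/r)))
      (𝓝[>] (0:ℝ)) (𝓝 2))
    (h3 : Tendsto (fun r : ℝ => FS r (r ^ ((1:ℝ)/5))) (𝓝[>] (0:ℝ)) (𝓝 1))
    (h4 : Tendsto (fun r : ℝ => FB r (r ^ ((1:ℝ)/5)) / Real.sqrt (Real.log (1/r)))
      (𝓝[>] (0:ℝ)) (𝓝 (Real.sqrt 2))) :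
    Tendsto (fun r : ℝ => FS r (Real.sqrt r) / FB r (Real.sqrt r)) (𝓝[>] (0:ℝ)) atTop ∧
    Tendsto (fun r : ℝ => FS r (r ^ ((1:ℝ)/5)) / FB r (r ^ ((1:ℝ)/5))) (𝓝[>] (0:ℝ)) (𝓝 0) ∧
    (¬ ∃ M : ℝ, 0 < M ∧ ∀ r ∈ Set.Ioo (0:ℝ) 1,
      FB r (r ^ ((1:ℝ)/5)) ≤ M * FS r (r ^ ((1:ℝ)/5))) ∧
    (¬ ∃ m : ℝ, 0 < m ∧ ∀ r ∈ Set.Ioo (0:ℝ) 1,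
      m * FS r (Real.sqrt r) ≤ FB r (Real.sqrt r)) := by
  have hIoo : ∀ᶠ r in 𝓝[>] (0:ℝ), r ∈ Set.Ioo (0:ℝ) 1 := Ioo_mem_nhdsGT one_pos
  have hFB_sqrt : Tendsto (fun r => √r * FB r √r) (𝓝[>] 0) (𝓝 0) := by
    refine (zero_mul (2 : ℝ) ▸ tendsto_sqrt_mul_sqrt_log_one_div_nhdsGT_zero.mul h2).congr' ?_
    filter_upwards [tendsto_sqrt_log_one_div_nhdsGT_zero.eventually_gt_atTop 0] with r hr
    field_simp
  have hratio_sqrt := tendsto_div_atTop_of_mul_tendsto one_half_pos h1 hFB_sqrt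
    (by filter_upwards [hIoo] with r hr using mul_pos (sqrt_pos.mpr hr.1) (hpos r hr).2.1)
  have hratio_rpow := tendsto_div_nhds_zero_of_div_tendsto (by positivity) h3
    tendsto_sqrt_log_one_div_nhdsGT_zero h4
  refine ⟨hratio_sqrt, hratio_rpow, ?_, ?_⟩
  · rintro ⟨M, hM, hle⟩
    obtain ⟨r, hr, hlt⟩ := exists_lt_mul_of_tendsto_div_nhds_zero hIoo
      (fun r hr => (hpos r hr).2.2.2) hratio_rpow (inv_pos.mpr hM)
    have := hle r hr
    rw [inv_mul_eq_div, lt_div_iff₀ hM] at hlt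
    linarith
  · rintro ⟨m, hm, hle⟩
    obtain ⟨r, hr, hlt⟩ := exists_lt_mul_of_tendsto_div_atTop hIoo
      (fun r hr => (hpos r hr).2.1) hratio_sqrt m⁻¹
    have := hle r hr
    rw [inv_mul_eq_div, div_lt_iff₀ hm] at hlt
    linarith
end
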